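/- For every integer m ≥ 4, real numbers 0 < v_1 < v_2 < ⋯ < v_m, and nonnegative real numbers A_1, …, A_m, the inequality Δ_{m−2} ≤ c_m* · v_{m−2} · A_{m−2} + c_m* · v_{m−1} · A_{m−1} + c_m* · v_m · A_m holds. -/

import Mathlib

/-- `csum v i = ∑_{j=1}^{i-1} 2^{j-1} v_{i-j}` (empty sum is 0). -/
noncomputable def csum (v : ℕ → ℝ) (i : ℕ) : ℝ :=
  ∑ j ∈ Finset.Icc 1 (i - 1), (2 : ℝ) ^ (j - 1) * v (i - j)

/-- `cval v i = c_i = (v_i + csum v i) / (v_{i+1} + csum v i)`. -/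
noncomputable def cval (v : ℕ → ℝ) (i : ℕ) : ℝ :=
  (v i + csum v i) / (v (i + 1) + csum v i)

/-- `cstar v m = c_m^* = max_{1 ≤ i ≤ m-1} c_i`. -/
noncomputable def cstar (v : ℕ → ℝ) (m : ℕ) : ℝ :=
  if hne : (Finset.Icc 1 (m - 1)).Nonempty then (Finset.Icc 1 (m - 1)).sup' hne (cval v)
  else 0

/-- `Sfun A m h = S_h = ∑_{ℓ=h}^{m} A_ℓ`. -/
noncomputable def Sfun (A : ℕ → ℝ) (m h : ℕ) : ℝ := ∑ ℓ ∈ Finset.Icc h m, A ℓ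

/-- `Urec A m h = U_h`, defined by `U_{m-1} = A_m` and
`U_h = min (A_h) (U_{h+1}) + S_{h+1}` for `h ≤ m-2`. -/
noncomputable def Urec (A : ℕ → ℝ) (m h : ℕ) : ℝ :=
  if hle : m - 1 ≤ h then A m
  else min (A h) (Urec A m (h + 1)) + Sfun A m (h + 1)
termination_by m - 1 - h
decreasing_by omega

/-- `Delta v A m h = Δ_h`,
`Δ_h = [(v_h + ∑_{j=1}^{h-2} 2^{j-1} v_{h-1-j}) - c_m^* (v_{h-1} + ∑_{j=1}^{h-2} 2^{j-1} v_{h-1-j})] U_h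
     + [(v_{h-1} + ∑_{j=1}^{h-2} 2^{j-1} v_{h-1-j}) - c_m^* ∑_{j=1}^{h-2} 2^{j-1} v_{h-1-j}] S_h
     + ∑_{ℓ=h+1}^{m-1} (v_ℓ - v_{ℓ-1}) U_ℓ`, where `∑_{j=1}^{h-2} 2^{j-1} v_{h-1-j} = csum v (h-1)`. -/
noncomputable def Delta (v A : ℕ → ℝ) (m h : ℕ) : ℝ :=
  ((v h + csum v (h - 1)) - cstar v m * (v (h - 1) + csum v (h - 1))) * Urec A m h +
  ((v (h - 1) + csum v (h - 1)) - cstar v m * csum v (h - 1)) * Sfun A m h +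
  ∑ ℓ ∈ Finset.Icc (h + 1) (m - 1), (v ℓ - v (ℓ - 1)) * Urec A m ℓ

/-!
Near the top, `U_{m-1} = A_m` and `U_{m-2} = min (A_{m-2}, A_m) + A_{m-1} + A_m`, so `Δ_{m-2}` is an
explicit expression in `A_{m-2}, A_{m-1}, A_m`. Writing `K_i = ∑_{j=1}^{i-1} 2^{j-1} v_{i-j}`, which
satisfies `K_{i+1} = v_i + 2 K_i`, the bounds `c_i ≤ c_m^*` for `i = m-3, m-2, m-1` read
`v_i + K_i ≤ c_m^* (v_{i+1} + K_i)`. The one for `i = m-2` is exactly the bound on the coefficient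
of `A_{m-1}`. The coefficients of `A_{m-2}` and `A_m` depend on which of the two realises the
minimum, and in either case the excess of one over its target is moved onto the other, the smaller
variable: this uses `c_m^* ≤ 1` when `A_{m-2} ≤ A_m`, and `c_{m-3} ≤ c_m^*` otherwise, with
`c_{m-1} ≤ c_m^*` closing both cases.
-/

lemma csum_succ (v : ℕ → ℝ) {i : ℕ} (hi : 1 ≤ i) :
    csum v (i + 1) = v i + 2 * csum v i := by
  unfold csum
  rw [Nat.add_sub_cancel, ← Finset.insert_Icc_add_one_left_eq_Icc hi,
    Finset.sum_insert (by simp), Nat.add_sub_cancel, pow_zero, one_mul]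
  have hshift : Finset.Icc (1 + 1) i = (Finset.Icc 1 (i - 1)).map (addRightEmbedding 1) := by
    rw [Finset.map_add_right_Icc]; congr 1; omega
  rw [hshift, Finset.sum_map, Finset.mul_sum]
  congr 1
  refine Finset.sum_congr rfl fun j hj => ?_
  rw [Finset.mem_Icc] at hj
  simp only [addRightEmbedding_apply]
  rw [show i + 1 - (j + 1) = i - j by omega, show j + 1 - 1 = (j - 1) + 1 by omega, pow_succ]
  ring

lemma csum_nonneg {v : ℕ → ℝ} {i : ℕ} (hv : ∀ k, 1 ≤ k → k < i → 0 ≤ v k) :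
    0 ≤ csum v i :=
  Finset.sum_nonneg fun j hj => by
    rw [Finset.mem_Icc] at hj
    exact mul_nonneg (by positivity) (hv _ (by omega) (by omega))

lemma cval_le_cstar (v : ℕ → ℝ) {m i : ℕ} (hi : i ∈ Finset.Icc 1 (m - 1)) :
    cval v i ≤ cstar v m := by
  rw [cstar, dif_pos ⟨i, hi⟩]
  exact Finset.le_sup' _ hi

lemma cstar_le_one {v : ℕ → ℝ} {m : ℕ} (h : ∀ i ∈ Finset.Icc 1 (m - 1), cval v i ≤ 1) :
    cstar v m ≤ 1 := by
  unfold cstar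
  split_ifs
  · exact Finset.sup'_le _ _ h
  · exact zero_le_one

section IncreasingChain

variable {v : ℕ → ℝ} {m : ℕ}

lemma pos_of_chain (hv1 : 0 < v 1) (hv : ∀ i, 1 ≤ i → i < m → v i < v (i + 1)) :
    ∀ k, 1 ≤ k → k ≤ m → 0 < v k
  | 0, hk, _ => absurd hk (by omega)
  | 1, _, _ => hv1
  | k + 2, _, hkm => (pos_of_chain hv1 hv (k + 1) (by omega) (by omega)).trans (hv _ (by omega) hkm)

lemma add_csum_pos_of_chain (hv1 : 0 < v 1) (hv : ∀ i, 1 ≤ i → i < m → v i < v (i + 1))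
    {i j : ℕ} (hj : 1 ≤ j) (hjm : j ≤ m) (hij : i ≤ j) : 0 < v j + csum v i :=
  add_pos_of_pos_of_nonneg (pos_of_chain hv1 hv j hj hjm)
    (csum_nonneg fun k hk hki => (pos_of_chain hv1 hv k hk (by omega)).le)

lemma cstar_le_one_of_chain (hv1 : 0 < v 1) (hv : ∀ i, 1 ≤ i → i < m → v i < v (i + 1)) :
    cstar v m ≤ 1 :=
  cstar_le_one fun i hi => by
    rw [Finset.mem_Icc] at hi
    rw [cval, div_le_one (add_csum_pos_of_chain hv1 hv (by omega) (by omega) (by omega))]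
    linarith [hv i hi.1 (by omega)]

lemma add_csum_le_cstar_mul (hv1 : 0 < v 1) (hv : ∀ i, 1 ≤ i → i < m → v i < v (i + 1))
    {i : ℕ} (hi : 1 ≤ i) (him : i < m) :
    v i + csum v i ≤ cstar v m * (v (i + 1) + csum v i) := by
  have h := cval_le_cstar v (m := m) (Finset.mem_Icc.mpr ⟨hi, by omega⟩)
  rw [cval, div_le_iff₀ (add_csum_pos_of_chain hv1 hv (by omega) him (by omega))] at h
  linarith

end IncreasingChain

lemma Sfun_self (A : ℕ → ℝ) (m : ℕ) : Sfun A m m = A m := by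
  rw [Sfun, Finset.Icc_self, Finset.sum_singleton]

lemma Sfun_eq_add (A : ℕ → ℝ) {m h : ℕ} (hh : h ≤ m) :
    Sfun A m h = A h + Sfun A m (h + 1) := by
  rw [Sfun, ← Finset.insert_Icc_add_one_left_eq_Icc hh, Finset.sum_insert (by simp), Sfun]

lemma Urec_of_le (A : ℕ → ℝ) {m h : ℕ} (hh : m - 1 ≤ h) : Urec A m h = A m := by
  rw [Urec, dif_pos hh]

lemma Urec_of_lt (A : ℕ → ℝ) {m h : ℕ} (hh : h < m - 1) :
    Urec A m h = min (A h) (Urec A m (h + 1)) + Sfun A m (h + 1) := by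
  rw [Urec, dif_neg (by omega)]

lemma Delta_add_three_add_one (v A : ℕ → ℝ) (n : ℕ) :
    Delta v A (n + 3) (n + 1) =
      (v (n + 1) + csum v n - cstar v (n + 3) * (v n + csum v n)) *
          (min (A (n + 1)) (A (n + 3)) + (A (n + 2) + A (n + 3))) +
        (v n + csum v n - cstar v (n + 3) * csum v n) * (A (n + 1) + (A (n + 2) + A (n + 3))) +
        (v (n + 2) - v (n + 1)) * A (n + 3) := by
  have hS₂ : Sfun A (n + 3) (n + 2) = A (n + 2) + A (n + 3) := by
    rw [Sfun_eq_add A (by omega), Sfun_self]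
  have hU₂ : Urec A (n + 3) (n + 2) = A (n + 3) := Urec_of_le A (by omega)
  have hU₁ : Urec A (n + 3) (n + 1) = min (A (n + 1)) (A (n + 3)) + (A (n + 2) + A (n + 3)) := by
    rw [Urec_of_lt A (by omega), hU₂, hS₂]
  rw [Delta, hU₁, Sfun_eq_add A (by omega : n + 1 ≤ n + 3), hS₂, Nat.add_sub_cancel,
    show n + 3 - 1 = n + 2 from rfl, Finset.Icc_self, Finset.sum_singleton, hU₂, Nat.add_sub_cancel]

lemma explicit_delta_le {p q r s K₀ K₁ K₂ c x y z : ℝ}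
    (hK₁ : K₁ = p + 2 * K₀) (hK₂ : K₂ = q + 2 * K₁)
    (h₀ : p + K₀ ≤ c * (q + K₀)) (h₁ : q + K₁ ≤ c * (r + K₁)) (h₂ : r + K₂ ≤ c * (s + K₂))
    (hc : c ≤ 1) (hqK₁ : 0 ≤ q + K₁) (hy : 0 ≤ y) (hz : 0 ≤ z) :
    (q + K₀ - c * (p + K₀)) * (min x z + (y + z)) + (p + K₀ - c * K₀) * (x + (y + z)) +
        (r - q) * z ≤
      c * q * x + c * r * y + c * s * z := by
  subst hK₁ hK₂
  have hy₁ := mul_le_mul_of_nonneg_right h₁ hy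
  have hz₂ := mul_le_mul_of_nonneg_right h₂ hz
  rcases le_total x z with hxz | hzx
  · -- the surplus `(1 - c) (q + K₁)` of the `x`-coefficient is moved onto `z`
    have := mul_le_mul_of_nonneg_left hxz (mul_nonneg (sub_nonneg.mpr hc) hqK₁)
    rw [min_eq_left hxz]
    linarith
  · -- the surplus of the `z`-coefficient is moved onto `x`, where `h₀` leaves room for it
    have := mul_le_mul_of_nonneg_left hzx (by linarith : 0 ≤ c * (q + K₀) - (p + K₀))
    rw [min_eq_right hzx]
    linarith

theorem stmt4_general (m : ℕ) (hm : 4 ≤ m) (v : ℕ → ℝ)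
    (hv1 : 0 < v 1) (hv : ∀ i, 1 ≤ i → i < m → v i < v (i + 1))
    (A : ℕ → ℝ) (hA : ∀ i ∈ Finset.Icc 1 m, 0 ≤ A i) :
    Delta v A m (m - 2) ≤
      cstar v m * v (m - 2) * A (m - 2) + cstar v m * v (m - 1) * A (m - 1) +
        cstar v m * v m * A m := by
  obtain ⟨n, rfl⟩ : ∃ n, m = n + 3 := ⟨m - 3, by omega⟩
  rw [show n + 3 - 2 = n + 1 from rfl, show n + 3 - 1 = n + 2 from rfl,
    Delta_add_three_add_one]
  exact explicit_delta_le (csum_succ v (by omega)) (csum_succ v (by omega))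
    (add_csum_le_cstar_mul hv1 hv (by omega) (by omega))
    (add_csum_le_cstar_mul hv1 hv (by omega) (by omega))
    (add_csum_le_cstar_mul hv1 hv (by omega) (by omega))
    (cstar_le_one_of_chain hv1 hv) (add_csum_pos_of_chain hv1 hv (by omega) (by omega) le_rfl).le
    (hA _ (Finset.mem_Icc.mpr ⟨by omega, by omega⟩)) (hA _ (Finset.mem_Icc.mpr ⟨by omega, le_rfl⟩))

/-- Lemma 4.4: for every `m ≥ 4`, reals `0 < v 1 < ⋯ < v m` with `v 0 = 0`, and
nonnegative reals `A_1, …, A_m`,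
`Δ_{m-2} ≤ c_m^* v_{m-2} A_{m-2} + c_m^* v_{m-1} A_{m-1} + c_m^* v_m A_m`. -/
theorem stmt4 (m : ℕ) (hm : 4 ≤ m) (v : ℕ → ℝ) (hv0 : v 0 = 0)
    (hv1 : 0 < v 1) (hv : ∀ i, 1 ≤ i → i < m → v i < v (i + 1))
    (A : ℕ → ℝ) (hA : ∀ i ∈ Finset.Icc 1 m, 0 ≤ A i) :
    Delta v A m (m - 2) ≤
      cstar v m * v (m - 2) * A (m - 2) + cstar v m * v (m - 1) * A (m - 1) +
        cstar v m * v m * A m :=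
  stmt4_general m hm v hv1 hv A hA
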